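/- Let c ∈ ℂ with c ≠ 0 and c ≠ 1, let β ∈ ℂ, and let n ∈ ℕ. For γ ∈ ℂ define the raising operator on functions f : ℂ → ℂ by (Ψ^γ_c f)(x) = (c/(c−1))·((x+γ−1)·f(x) − (x/c)·f(x−1)). Then for every x ∈ ℂ, (Ψ^{β+1}_c ∘ Ψ^{β+2}_c ∘ ⋯ ∘ Ψ^{β+n}_c)(1)(x) = Σ_{k=0}^{n} binom(n,k)·(c^{n−k}/(c−1)^{n})·(−x)_k·(x+β)_{n−k}, where (y)_m = y(y+1)⋯(y+m−1) is the rising Pochhammer symbol and 1 denotes the constant function 1. -/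
import Mathlib


/-- The rising Pochhammer symbol `(y)_m = y(y+1)⋯(y+m-1)`. -/
noncomputable def poch (y : ℂ) (m : ℕ) : ℂ := ∏ i ∈ Finset.range m, (y + i)

/-- The Meixner raising operator
`(Ψ^γ_c f)(x) = (c/(c-1))·((x+γ-1)·f(x) - (x/c)·f(x-1))`. -/
noncomputable def PsiOp (γ c : ℂ) (f : ℂ → ℂ) : ℂ → ℂ :=
  fun x => (c / (c - 1)) * ((x + γ - 1) * f x - (x / c) * f (x - 1))

/-- The composition `Ψ^{γ₀+1}_c ∘ Ψ^{γ₀+2}_c ∘ ⋯ ∘ Ψ^{γ₀+j}_c`. -/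
noncomputable def chainPsi (c : ℂ) : ℂ → ℕ → (ℂ → ℂ) → (ℂ → ℂ)
  | _, 0 => id
  | γ₀, j + 1 => PsiOp (γ₀ + 1) c ∘ chainPsi c (γ₀ + 1) j

lemma poch_succ_left (y : ℂ) (m : ℕ) : poch y (m + 1) = y * poch (y + 1) m := by
  unfold poch
  rw [Finset.prod_range_succ']
  simp only [Nat.cast_zero, add_zero]
  rw [mul_comm]
  congr 1
  apply Finset.prod_congr rfl
  intro i _
  push_cast
  ring

/-- The single-ray Rodrigues formula for Meixner--Angelesco polynomials:
`(Ψ^{β+1}_c ∘ ⋯ ∘ Ψ^{β+n}_c)(1)(x) = ∑_{k=0}^n binom(n,k) c^{n-k}/(c-1)^n (-x)_k (x+β)_{n-k}`. -/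
theorem meixner_rodrigues_single_ray (c : ℂ) (hc0 : c ≠ 0) (hc1 : c ≠ 1) (β : ℂ)
    (n : ℕ) (x : ℂ) :
    chainPsi c β n (fun _ => 1) x
      = ∑ k ∈ Finset.range (n + 1),
          (n.choose k : ℂ) * (c ^ (n - k) / (c - 1) ^ n) * poch (-x) k *
            poch (x + β) (n - k) := by
  have hc1' : c - 1 ≠ 0 := sub_ne_zero.mpr hc1
  induction n generalizing β x with
  | zero => simp [chainPsi, poch]
  | succ n ih =>
    simp only [chainPsi, Function.comp_apply, PsiOp]
    rw [ih, ih]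
    set T : ℕ → ℂ := fun k =>
      c ^ (n + 1 - k) / (c - 1) ^ (n + 1) * poch (-x) k * poch (x + β) (n + 1 - k) with hT
    have hRHS :
        (∑ k ∈ Finset.range (n + 1 + 1),
          ((n+1).choose k : ℂ) * (c ^ (n + 1 - k) / (c - 1) ^ (n + 1)) * poch (-x) k *
            poch (x + β) (n + 1 - k))
        = (∑ k ∈ Finset.range (n + 1), (n.choose k : ℂ) * T k)
          + ∑ k ∈ Finset.range (n + 1),
              (n.choose k : ℂ) * (c ^ (n - k) / (c - 1) ^ (n + 1)) * poch (-x) (k + 1) *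
                poch (x + β) (n - k) := by
      rw [Finset.sum_range_succ']
      have hsplit : ∀ k ∈ Finset.range (n + 1),
          ((n+1).choose (k+1) : ℂ) * (c ^ (n + 1 - (k+1)) / (c - 1) ^ (n + 1)) * poch (-x) (k+1) *
            poch (x + β) (n + 1 - (k+1))
          = (n.choose (k+1) : ℂ) * T (k+1)
            + (n.choose k : ℂ) * (c ^ (n - k) / (c - 1) ^ (n + 1)) * poch (-x) (k + 1) *
                poch (x + β) (n - k) := by
        intro k _
        rw [Nat.choose_succ_succ]
        push_cast
        simp only [hT, Nat.succ_sub_succ]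
        ring
      rw [Finset.sum_congr rfl hsplit, Finset.sum_add_distrib]
      have h0 : ((n+1).choose 0 : ℂ) * (c ^ (n + 1 - 0) / (c - 1) ^ (n + 1)) * poch (-x) 0 *
          poch (x + β) (n + 1 - 0) = (n.choose 0 : ℂ) * T 0 := by
        simp [hT]
      rw [h0]
      have h1 : (∑ k ∈ Finset.range (n + 1), (n.choose (k+1) : ℂ) * T (k+1))
            + (n.choose 0 : ℂ) * T 0
          = ∑ k ∈ Finset.range (n + 1 + 1), (n.choose k : ℂ) * T k :=
        (Finset.sum_range_succ' (fun k => (n.choose k : ℂ) * T k) (n+1)).symm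
      rw [add_right_comm, h1, Finset.sum_range_succ, Nat.choose_succ_self]
      push_cast
      ring
    rw [hRHS, mul_sub]
    have hA : c / (c - 1) * ((x + (β + 1) - 1) *
          ∑ k ∈ Finset.range (n + 1),
            (n.choose k : ℂ) * (c ^ (n - k) / (c - 1) ^ n) * poch (-x) k *
              poch (x + (β + 1)) (n - k))
        = ∑ k ∈ Finset.range (n + 1), (n.choose k : ℂ) * T k := by
      rw [Finset.mul_sum, Finset.mul_sum]
      apply Finset.sum_congr rfl
      intro k hk
      have hk' : k ≤ n := Nat.lt_succ_iff.mp (Finset.mem_range.mp hk)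
      simp only [hT]
      rw [show n + 1 - k = (n - k) + 1 from (Nat.succ_sub hk'), poch_succ_left,
        show x + β + 1 = x + (β + 1) by ring, pow_succ]
      field_simp
      ring
    have hB : c / (c - 1) * (x / c *
          ∑ k ∈ Finset.range (n + 1),
            (n.choose k : ℂ) * (c ^ (n - k) / (c - 1) ^ n) * poch (-(x - 1)) k *
              poch (x - 1 + (β + 1)) (n - k))
        = - ∑ k ∈ Finset.range (n + 1),
            (n.choose k : ℂ) * (c ^ (n - k) / (c - 1) ^ (n + 1)) * poch (-x) (k + 1) *
              poch (x + β) (n - k) := by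
      rw [Finset.mul_sum, Finset.mul_sum, ← Finset.sum_neg_distrib]
      apply Finset.sum_congr rfl
      intro k hk
      rw [poch_succ_left (-x) k, show -(x - 1) = -x + 1 by ring,
        show x - 1 + (β + 1) = x + β by ring, pow_succ]
      field_simp
    rw [hA, hB, sub_neg_eq_add]
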